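/- arXiv:2603.24786 — 2 statements merged into one kernel-verified Lean document; each statement's English description precedes it below -/
import Mathlib

section
/- In the setting of the previous decomposition, additionally note $\hat\beta - \beta = \frac{1}{G}\Pi\sum_{g=1}^G X_g'u_g$. Define $\sigma > 0$, $\omega_{1g} = \sigma^{-1}\lambda'\Pi X_g'u_g$, $\omega_{2g} = \sigma^{-1}\begin{pmatrix} I_k \\ X_g'X_g\Pi'\lambda\lambda' \end{pmatrix}\Pi X_g'u_g$, $\omega_{3g} = \sigma^{-2}\left((\lambda'\Pi X_g'u_g)^2 - \sigma_g^2\right)$ where $\sigma^2 = \frac{1}{G}\sum_g \sigma_g^2$, and the $2k \times 2k$ matrix $\Gamma = \begin{pmatrix} -\frac{1}{G}\sum_g X_g'X_g\Pi'\lambda\lambda'\Pi X_g'X_g & I_k \\ I_k & O \end{pmatrix}$. Then with $\hat\sigma^2 = \frac{1}{G}\sum_g(\lambda'\Pi X_g'\hat u_g)^2$, one has $\frac{\hat\sigma^2}{\sigma^2} = 1 - \left(\frac{1}{G}\sum_{g=1}^G\omega_{2g}\right)'\Gamma\left(\frac{1}{G}\sum_{g=1}^G\omega_{2g}\right) + \frac{1}{G}\sum_{g=1}^G\omega_{3g}$.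 -/
/-!
Put `b = β̂ - β = S⁻¹ ∑ X_g'u_g`, which is also the average of the scores `a_g = Π X_g'u_g`,
and let `s_g = λ'a_g`, `c_g = X_g'X_g Π λ`. By the symmetry of `Π` and `X_g'X_g`, the residual
score is `λ'Π X_g'û_g = s_g - c_g'b`, so `σ̂² = mean s_g² - 2 b'e + b'A b` with `e = mean s_g c_g`
and `A = mean c_g c_g'`, the upper-left block of `-Γ`. The average of `ω₂g` is `(b, e)/σ`, so the
quadratic form equals `(2 b'e - b'A b)/σ²`, while the average of `ω₃g` is `(mean s_g² - σ²)/σ²`.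
-/

open Matrix Finset

namespace Matrix

variable {ι n R : Type*} [CommRing R]

theorem isSymm_transpose_mul_self' {m : Type*} [Fintype m] (X : Matrix m n R) :
    (Xᵀ * X).IsSymm :=
  transpose_mul _ _

theorem isSymm_sum_transpose_mul_self [Fintype ι] {m : ι → Type*} [∀ i, Fintype (m i)]
    (X : ∀ i, Matrix (m i) n R) : (∑ i, (X i)ᵀ * X i).IsSymm := by
  simp only [IsSymm, transpose_sum, transpose_mul, transpose_transpose]

variable [Fintype n]

theorem sumElim_dotProduct_fromBlocks_one_one_zero_mulVec [DecidableEq n] (A : Matrix n n R)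
    (x y : n → R) :
    Sum.elim x y ⬝ᵥ (fromBlocks A 1 1 0 *ᵥ Sum.elim x y) = x ⬝ᵥ (A *ᵥ x) + 2 * (x ⬝ᵥ y) := by
  rw [fromBlocks_mulVec, Sum.elim_comp_inl, Sum.elim_comp_inr, sumElim_dotProduct_sumElim]
  simp only [one_mulVec, zero_mulVec, add_zero, dotProduct_add, dotProduct_comm y x]
  ring

theorem sum_sub_dotProduct_sq [Fintype ι] (s : ι → R) (c : ι → n → R) (b : n → R) :
    ∑ i, (s i - c i ⬝ᵥ b) ^ 2
      = ∑ i, s i ^ 2 - 2 * (b ⬝ᵥ ∑ i, s i • c i) + b ⬝ᵥ ((∑ i, vecMulVec (c i) (c i)) *ᵥ b) := by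
  simp only [dotProduct_sum, sum_mulVec, vecMulVec_mulVec, dotProduct_smul, smul_eq_mul,
    op_smul_eq_smul, Finset.mul_sum, ← Finset.sum_sub_distrib, ← Finset.sum_add_distrib]
  refine Finset.sum_congr rfl fun i _ => ?_
  rw [dotProduct_comm b (c i)]
  ring

theorem dotProduct_mulVec_of_isSymm {A : Matrix n n R} (hA : A.IsSymm) (x y : n → R) :
    x ⬝ᵥ (A *ᵥ y) = (A *ᵥ x) ⬝ᵥ y := by
  rw [dotProduct_mulVec, ← mulVec_transpose, hA.eq]

theorem mul_vecMulVec_mul_transpose (M : Matrix n n R) (x : n → R) :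
    M * vecMulVec x x * Mᵀ = vecMulVec (M *ᵥ x) (M *ᵥ x) := by
  rw [mul_vecMulVec, vecMulVec_mul, vecMul_transpose]

theorem mul_mul_vecMulVec_mul_mul_of_isSymm {M P : Matrix n n R} (hM : M.IsSymm) (hP : P.IsSymm)
    (x : n → R) :
    M * P * vecMulVec x x * P * M = vecMulVec (M *ᵥ (P *ᵥ x)) (M *ᵥ (P *ᵥ x)) := by
  have hMP : (M * P)ᵀ = P * M := by rw [transpose_mul, hM.eq, hP.eq]
  rw [Matrix.mul_assoc _ P M, ← hMP, mul_vecMulVec_mul_transpose, mulVec_mulVec]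

theorem dotProduct_mulVec_transpose_mulVec_sub {m : Type*} [Fintype m] {P : Matrix n n R}
    (hP : P.IsSymm) (X : Matrix m n R) (lam b : n → R) (v : m → R) :
    lam ⬝ᵥ (P *ᵥ (Xᵀ *ᵥ (v - X *ᵥ b)))
      = lam ⬝ᵥ (P *ᵥ (Xᵀ *ᵥ v)) - ((Xᵀ * X) *ᵥ (P *ᵥ lam)) ⬝ᵥ b := by
  rw [mulVec_sub, mulVec_sub, dotProduct_sub, mulVec_mulVec b Xᵀ X,
    dotProduct_mulVec_of_isSymm hP lam ((Xᵀ * X) *ᵥ b),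
    dotProduct_mulVec_of_isSymm (isSymm_transpose_mul_self' X)]

theorem inv_mulVec_sum_transpose_mulVec_of_eq_add [Fintype ι] [DecidableEq n] {m : ι → Type*}
    [∀ i, Fintype (m i)] (X : ∀ i, Matrix (m i) n R) {Y u : ∀ i, m i → R} {β : n → R}
    (hY : ∀ i, Y i = X i *ᵥ β + u i) (h : IsUnit (∑ i, (X i)ᵀ * X i).det) :
    (∑ i, (X i)ᵀ * X i)⁻¹ *ᵥ ∑ i, (X i)ᵀ *ᵥ Y i
      = β + (∑ i, (X i)ᵀ * X i)⁻¹ *ᵥ ∑ i, (X i)ᵀ *ᵥ u i := by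
  have hscore : ∑ i, (X i)ᵀ *ᵥ Y i = (∑ i, (X i)ᵀ * X i) *ᵥ β + ∑ i, (X i)ᵀ *ᵥ u i := by
    simp only [hY, mulVec_add, mulVec_mulVec, sum_mulVec, Finset.sum_add_distrib]
  rw [hscore, mulVec_add, mulVec_mulVec, nonsing_inv_mul _ h, one_mulVec]

theorem smul_sum_inv_smul_mulVec [Fintype ι] [DecidableEq n] {K : Type*} [Field K]
    {S : Matrix n n K} (hS : IsUnit S.det) {c : K} (hc : c ≠ 0) (w : ι → n → K) :
    c • ∑ i, (c • S)⁻¹ *ᵥ w i = S⁻¹ *ᵥ ∑ i, w i := by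
  have : Invertible c := invertibleOfNonzero hc
  rw [← mulVec_sum, Matrix.inv_smul S c hS, smul_mulVec, smul_smul, mul_invOf_self, one_smul]

end Matrix

theorem smul_sum_sumElim {ι α β M R : Type*} [AddCommMonoid M] [DistribSMul R M] (r : R)
    (s : Finset ι) (f : ι → α → M) (g : ι → β → M) :
    r • ∑ i ∈ s, Sum.elim (f i) (g i) = Sum.elim (r • ∑ i ∈ s, f i) (r • ∑ i ∈ s, g i) := by
  ext (a | b) <;> simp [Finset.sum_apply]

theorem studentized_variance_ratio {ι n K : Type*} [Fintype ι] [Fintype n] [DecidableEq n]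
    [Field K] {σ : K} (hσ : σ ≠ 0) (m : K) (σg2 : ι → K) (hσ2 : σ ^ 2 = m * ∑ i, σg2 i)
    (s : ι → K) (c : ι → n → K) (b : n → K) :
    (m * ∑ i, (s i - c i ⬝ᵥ b) ^ 2) / σ ^ 2
      = 1 - Sum.elim (σ⁻¹ • b) (σ⁻¹ • m • ∑ i, s i • c i) ⬝ᵥ
          (fromBlocks (-(m • ∑ i, vecMulVec (c i) (c i))) 1 1 0 *ᵥ
            Sum.elim (σ⁻¹ • b) (σ⁻¹ • m • ∑ i, s i • c i))
        + m * ∑ i, (σ ^ 2)⁻¹ * (s i ^ 2 - σg2 i) := by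
  rw [sumElim_dotProduct_fromBlocks_one_one_zero_mulVec, sum_sub_dotProduct_sq,
    ← Finset.mul_sum, Finset.sum_sub_distrib]
  simp only [neg_mulVec, smul_mulVec, mulVec_smul, dotProduct_neg, dotProduct_smul,
    smul_dotProduct, smul_eq_mul]
  field_simp
  linear_combination -hσ2

/-- Lemma 1 of the paper (squared form): with the per-cluster scores
`ω₂g = σ⁻¹ (I_k ; X_g'X_g Π λ λ') Π X_g'u_g`,
`ω₃g = σ⁻² ((λ'Π X_g'u_g)² - σ_g²)`, the block matrix
`Γ = [ -(1/G)∑ X_g'X_g Π λ λ' Π X_g'X_g , I ; I , 0 ]`,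
and `σ² = (1/G)∑ σ_g²`, the studentization factor satisfies
`σ̂²/σ² = 1 - W₂'Γ W₂ + (1/G)∑ ω₃g`, where `W₂ = (1/G)∑ ω₂g`. -/
theorem cluster_variance_quadratic_form
    (G k : ℕ) (hG : 0 < G) (N : Fin G → ℕ)
    (X : ∀ g : Fin G, Matrix (Fin (N g)) (Fin k) ℝ)
    (Y u : ∀ g : Fin G, Fin (N g) → ℝ)
    (β lam : Fin k → ℝ)
    (hmodel : ∀ g, Y g = X g *ᵥ β + u g)
    (S : Matrix (Fin k) (Fin k) ℝ) (hS : S = ∑ g, (X g)ᵀ * X g)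
    (hinv : IsUnit S.det)
    (βhat : Fin k → ℝ) (hβhat : βhat = S⁻¹ *ᵥ (∑ g, (X g)ᵀ *ᵥ Y g))
    (Pm : Matrix (Fin k) (Fin k) ℝ) (hPm : Pm = ((G : ℝ)⁻¹ • S)⁻¹)
    (uhat : ∀ g : Fin G, Fin (N g) → ℝ) (huhat : ∀ g, uhat g = Y g - X g *ᵥ βhat)
    (σ : ℝ) (hσ : 0 < σ)
    (σg2 : Fin G → ℝ) (hσ2 : σ ^ 2 = (G : ℝ)⁻¹ * ∑ g, σg2 g)
    (σhat2 : ℝ)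
    (hσhat2 : σhat2 = (G : ℝ)⁻¹ * ∑ g, (lam ⬝ᵥ (Pm *ᵥ ((X g)ᵀ *ᵥ uhat g))) ^ 2)
    (ω₂ : Fin G → (Fin k ⊕ Fin k) → ℝ)
    (hω₂ : ∀ g, ω₂ g = Sum.elim
        (σ⁻¹ • (Pm *ᵥ ((X g)ᵀ *ᵥ u g)))
        (σ⁻¹ • ((lam ⬝ᵥ (Pm *ᵥ ((X g)ᵀ *ᵥ u g))) • (((X g)ᵀ * X g) *ᵥ (Pm *ᵥ lam)))))
    (ω₃ : Fin G → ℝ)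
    (hω₃ : ∀ g, ω₃ g = (σ ^ 2)⁻¹ * ((lam ⬝ᵥ (Pm *ᵥ ((X g)ᵀ *ᵥ u g))) ^ 2 - σg2 g))
    (Γ : Matrix (Fin k ⊕ Fin k) (Fin k ⊕ Fin k) ℝ)
    (hΓ : Γ = Matrix.fromBlocks
        (-((G : ℝ)⁻¹ • ∑ g, (X g)ᵀ * X g * Pm * vecMulVec lam lam * Pm * ((X g)ᵀ * X g)))
        1 1 0) :
    σhat2 / σ ^ 2
      = 1 - ((G : ℝ)⁻¹ • ∑ g, ω₂ g) ⬝ᵥ (Γ *ᵥ ((G : ℝ)⁻¹ • ∑ g, ω₂ g))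
        + (G : ℝ)⁻¹ * ∑ g, ω₃ g := by
  have hGinv : (G : ℝ)⁻¹ ≠ 0 := inv_ne_zero (Nat.cast_ne_zero.mpr hG.ne')
  have hPsym : Pm.IsSymm := hPm ▸ ((hS ▸ isSymm_sum_transpose_mul_self X).smul _).inv
  set b := S⁻¹ *ᵥ ∑ g, (X g)ᵀ *ᵥ u g
  set s : Fin G → ℝ := fun g => lam ⬝ᵥ (Pm *ᵥ ((X g)ᵀ *ᵥ u g))
  set c : Fin G → Fin k → ℝ := fun g => ((X g)ᵀ * X g) *ᵥ (Pm *ᵥ lam)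
  have hβhat' : βhat = β + b := by
    rw [hβhat, hS, inv_mulVec_sum_transpose_mulVec_of_eq_add X hmodel (hS ▸ hinv), ← hS]
  have hres (g : Fin G) : lam ⬝ᵥ (Pm *ᵥ ((X g)ᵀ *ᵥ uhat g)) = s g - c g ⬝ᵥ b := by
    rw [huhat, hmodel, hβhat', mulVec_add, add_sub_add_left_eq_sub,
      dotProduct_mulVec_transpose_mulVec_sub hPsym]
  have hmean : (G : ℝ)⁻¹ • ∑ g, Pm *ᵥ ((X g)ᵀ *ᵥ u g) = b := by
    rw [hPm]
    exact smul_sum_inv_smul_mulVec hinv hGinv _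
  have hW : (G : ℝ)⁻¹ • ∑ g, ω₂ g = Sum.elim (σ⁻¹ • b) (σ⁻¹ • (G : ℝ)⁻¹ • ∑ g, s g • c g) := by
    simp_rw [hω₂]
    rw [smul_sum_sumElim, ← smul_sum, ← smul_sum, smul_comm _ σ⁻¹, smul_comm _ σ⁻¹, hmean]
  have hA : ∑ g, (X g)ᵀ * X g * Pm * vecMulVec lam lam * Pm * ((X g)ᵀ * X g)
      = ∑ g, vecMulVec (c g) (c g) :=
    sum_congr rfl fun g _ =>
      mul_mul_vecMulVec_mul_mul_of_isSymm (isSymm_transpose_mul_self' _) hPsym lam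
  rw [hσhat2, hΓ, hA, hW]
  simp only [hres, hω₃]
  exact studentized_variance_ratio hσ.ne' _ σg2 hσ2 s c b
end

section
/- Let $\omega_{1g}$ (scalar) and $\omega_{2g}$ ($\mathbb{R}^m$-valued) for $g=1,\ldots,G$ be mean-zero with the pairs $(\omega_{1g},\omega_{2g})$ independent across $g$, $\frac{1}{G}\sum_g E[\omega_{1g}^2] = 1$, and uniformly bounded fourth moments. Let $W_1 = \frac{1}{G}\sum_g \omega_{1g}$, $W_2 = \frac{1}{G}\sum_g \omega_{2g}$, and let $\Gamma$ be a fixed symmetric $m\times m$ matrix. Then $G\,E[W_1^2\, W_2'\Gamma W_2] = G^{-1}\left(\mu_{2,2} + 2\mu_{1,2}'\Gamma\mu_{1,2}\right) + O(G^{-2})$, where $\mu_{2,2} = \frac{1}{G}\sum_g E[\omega_{2g}'\Gamma\omega_{2g}]$ and $\mu_{1,2} = \frac{1}{G}\sum_g E[\omega_{1g}\omega_{2g}]$. -/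
/-!
Multiplying out `W₁² · W₂'ΓW₂` over cluster indices reduces everything to fourth moments
`E[S_k S_l S_p S_q]` of sums `S = ∑_g X_g` of independent centred vectors. A term
`E[X_{g₁ k} X_{g₂ l} X_{g₃ p} X_{g₄ q}]` in which one cluster occurs only once vanishes by
independence and zero mean. What survives are the three pairings of the indices, each summed over
all pairs of clusters to a product of summed second moments; these sums count the full diagonal
`g₁ = g₂ = g₃ = g₄` three times, and the correction there is the joint fourth cumulant of `X_g`.
For `X_g = (ω₁g, ω₂g)` the pairing of the two `ω₁`'s gives `G² μ₂₂` (since `∑_g E[ω₁g²] = G`),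
the two cross pairings give `2 G² μ₁₂'Γμ₁₂`, and the `G` cumulants are bounded by the fourth
moments, so after the scaling `G · G⁻⁴` they contribute `O(G⁻²)`.
-/

open MeasureTheory ProbabilityTheory Matrix Finset

instance ENNReal.holderTriple_four_four_two : ENNReal.HolderTriple 4 4 2 :=
  ⟨by rw [← two_mul, show (4 : ENNReal) = 2 * 2 by norm_num, ENNReal.mul_inv (by simp) (by simp),
    ← mul_assoc, ENNReal.mul_inv_cancel two_ne_zero ENNReal.ofNat_ne_top, one_mul]⟩

section FourthMoment

variable {Ω ι : Type*} [MeasurableSpace Ω] {μ : Measure Ω}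

lemma integrable_mul_mul_mul_of_memLp_four {f g h k : Ω → ℝ} (hf : MemLp f 4 μ)
    (hg : MemLp g 4 μ) (hh : MemLp h 4 μ) (hk : MemLp k 4 μ) :
    Integrable (fun x => f x * g x * h x * k x) μ := by
  simpa only [Pi.mul_def, mul_assoc] using
    (hg.mul' (r := 2) hf).integrable_mul (hk.mul' (r := 2) hh)

lemma integral_mul_eq_zero_of_iIndepFun {E : Type*} [MeasurableSpace E] {Y : ι → Ω → E}
    (hY : ∀ i, Measurable (Y i)) (hind : iIndepFun Y μ)
    {k p q r : ι} (hkp : k ≠ p) (hkq : k ≠ q) (hkr : k ≠ r) {f u v w : E → ℝ}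
    (hf : Measurable f) (hu : Measurable u) (hv : Measurable v) (hw : Measurable w)
    (hf0 : ∫ x, f (Y k x) ∂μ = 0) :
    ∫ x, f (Y k x) * (u (Y p x) * v (Y q x) * w (Y r x)) ∂μ = 0 := by
  classical
  have hdisj : Disjoint {k} ({p, q, r} : Finset ι) := by simp [hkp, hkq, hkr]
  have hindep := (hind.indepFun_finset _ _ hdisj hY).comp
    (φ := fun F => f (F ⟨k, mem_singleton_self k⟩))
    (ψ := fun F => u (F ⟨p, mem_insert_self p _⟩)
      * v (F ⟨q, mem_insert_of_mem (mem_insert_self q _)⟩)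
      * w (F ⟨r, mem_insert_of_mem (mem_insert_of_mem (mem_singleton_self r))⟩))
    (by fun_prop) (by fun_prop)
  exact (hindep.integral_fun_mul_eq_mul_integral (hf.comp (hY k)).aestronglyMeasurable
    (((hu.comp (hY p)).mul (hv.comp (hY q))).mul (hw.comp (hY r))).aestronglyMeasurable).trans
    (mul_eq_zero_of_left hf0 _)

/-- Joint fourth cumulant of `a, b, c, d`; the formula is the cumulant only for centred
variables. -/
noncomputable def centredFourthCumulant (μ : Measure Ω) (a b c d : Ω → ℝ) : ℝ :=
  ∫ x, a x * b x * c x * d x ∂μ - (∫ x, a x * b x ∂μ) * (∫ x, c x * d x ∂μ)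
    - (∫ x, a x * c x ∂μ) * (∫ x, b x * d x ∂μ) - (∫ x, a x * d x ∂μ) * (∫ x, b x * c x ∂μ)

variable {n : Type*} {X : ι → Ω → n → ℝ}

lemma integral_mul_mul_mul_eq_zero_of_isolated (hX : ∀ g, Measurable (X g))
    (hind : iIndepFun X μ) (hmean : ∀ g k, ∫ x, X g x k ∂μ = 0) {g₁ g₂ g₃ g₄ : ι} (k l p q : n)
    (h : (g₁ ≠ g₂ ∧ g₁ ≠ g₃ ∧ g₁ ≠ g₄) ∨ (g₂ ≠ g₁ ∧ g₂ ≠ g₃ ∧ g₂ ≠ g₄) ∨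
      (g₃ ≠ g₁ ∧ g₃ ≠ g₂ ∧ g₃ ≠ g₄) ∨ (g₄ ≠ g₁ ∧ g₄ ≠ g₂ ∧ g₄ ≠ g₃)) :
    ∫ x, X g₁ x k * X g₂ x l * X g₃ x p * X g₄ x q ∂μ = 0 := by
  have isolated {g g' g'' g''' : ι} (c c' c'' c''' : n) (h' : g ≠ g') (h'' : g ≠ g'')
      (h''' : g ≠ g''') : ∫ x, X g x c * (X g' x c' * X g'' x c'' * X g''' x c''') ∂μ = 0 :=
    integral_mul_eq_zero_of_iIndepFun hX hind h' h'' h''' (measurable_pi_apply c)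
      (measurable_pi_apply c') (measurable_pi_apply c'') (measurable_pi_apply c''') (hmean g c)
  rcases h with ⟨h₂, h₃, h₄⟩ | ⟨h₁, h₃, h₄⟩ | ⟨h₁, h₂, h₄⟩ | ⟨h₁, h₂, h₃⟩
  · exact (integral_congr_ae (.of_forall fun x => by ring)).trans (isolated k l p q h₂ h₃ h₄)
  · exact (integral_congr_ae (.of_forall fun x => by ring)).trans (isolated l k p q h₁ h₃ h₄)
  · exact (integral_congr_ae (.of_forall fun x => by ring)).trans (isolated p k l q h₁ h₂ h₄)
  · exact (integral_congr_ae (.of_forall fun x => by ring)).trans (isolated q k l p h₁ h₂ h₃)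

lemma integral_mul_mul_mul_mul_of_ne (hX : ∀ g, Measurable (X g)) (hind : iIndepFun X μ)
    {g h : ι} (hgh : g ≠ h) (k l p q : n) :
    ∫ x, X g x k * X g x l * (X h x p * X h x q) ∂μ
      = (∫ x, X g x k * X g x l ∂μ) * ∫ x, X h x p * X h x q ∂μ :=
  (hind.indepFun hgh).integral_comp_mul_comp (hX g).aemeasurable (hX h).aemeasurable
    (f := fun y => y k * y l) (g := fun y => y p * y q) (by fun_prop) (by fun_prop)

lemma integral_mul_mul_mul_eq_ite [DecidableEq ι] (hX : ∀ g, Measurable (X g))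
    (hind : iIndepFun X μ) (hmean : ∀ g k, ∫ x, X g x k ∂μ = 0) (g₁ g₂ g₃ g₄ : ι) (k l p q : n) :
    ∫ x, X g₁ x k * X g₂ x l * X g₃ x p * X g₄ x q ∂μ =
      (if g₁ = g₂ then if g₃ = g₄ then
        (∫ x, X g₁ x k * X g₁ x l ∂μ) * ∫ x, X g₃ x p * X g₃ x q ∂μ else 0 else 0)
      + (if g₁ = g₃ then if g₂ = g₄ then
        (∫ x, X g₁ x k * X g₁ x p ∂μ) * ∫ x, X g₂ x l * X g₂ x q ∂μ else 0 else 0)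
      + (if g₁ = g₄ then if g₂ = g₃ then
        (∫ x, X g₁ x k * X g₁ x q ∂μ) * ∫ x, X g₂ x l * X g₂ x p ∂μ else 0 else 0)
      + (if g₁ = g₂ then if g₁ = g₃ then if g₁ = g₄ then centredFourthCumulant μ
        (fun x => X g₁ x k) (fun x => X g₁ x l) (fun x => X g₁ x p) (fun x => X g₁ x q)
        else 0 else 0 else 0) := by
  have isolated := integral_mul_mul_mul_eq_zero_of_isolated hX hind hmean (μ := μ)
    (g₁ := g₁) (g₂ := g₂) (g₃ := g₃) (g₄ := g₄) k l p q
  by_cases h₁₂ : g₁ = g₂ <;> by_cases h₁₃ : g₁ = g₃ <;> by_cases h₁₄ : g₁ = g₄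
  · subst h₁₂ h₁₃ h₁₄
    simp only [if_true, centredFourthCumulant]
    ring
  · subst h₁₂ h₁₃
    simp [h₁₄, isolated (by grind)]
  · subst h₁₂ h₁₄
    simp [h₁₃, Ne.symm h₁₃, isolated (by grind)]
  · subst h₁₂
    by_cases h₃₄ : g₃ = g₄
    · subst h₃₄
      simp [h₁₃, ← integral_mul_mul_mul_mul_of_ne hX hind h₁₃, mul_assoc]
    · simp [h₁₃, h₃₄, isolated (by grind)]
  · subst h₁₃ h₁₄
    simp [h₁₂, Ne.symm h₁₂, isolated (by grind)]
  · subst h₁₃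
    by_cases h₂₄ : g₂ = g₄
    · subst h₂₄
      simp [h₁₂, ← integral_mul_mul_mul_mul_of_ne hX hind h₁₂]
      exact integral_congr_ae (.of_forall fun x => by ring)
    · simp [h₁₂, h₁₄, h₂₄, isolated (by grind)]
  · subst h₁₄
    by_cases h₂₃ : g₂ = g₃
    · subst h₂₃
      simp [h₁₂, ← integral_mul_mul_mul_mul_of_ne hX hind h₁₂]
      exact integral_congr_ae (.of_forall fun x => by ring)
    · simp [h₁₂, h₁₃, h₂₃, isolated (by grind)]
  · simp [h₁₂, h₁₃, h₁₄, isolated (by grind)]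

theorem integral_sum_mul_sum_mul_sum_mul_sum [Fintype ι] (hX : ∀ g, Measurable (X g))
    (hind : iIndepFun X μ) (hL4 : ∀ g k, MemLp (fun x => X g x k) 4 μ)
    (hmean : ∀ g k, ∫ x, X g x k ∂μ = 0) (k l p q : n) :
    ∫ x, (∑ g, X g x k) * (∑ g, X g x l) * (∑ g, X g x p) * (∑ g, X g x q) ∂μ =
      (∑ g, ∫ x, X g x k * X g x l ∂μ) * (∑ g, ∫ x, X g x p * X g x q ∂μ)
      + (∑ g, ∫ x, X g x k * X g x p ∂μ) * (∑ g, ∫ x, X g x l * X g x q ∂μ)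
      + (∑ g, ∫ x, X g x k * X g x q ∂μ) * (∑ g, ∫ x, X g x l * X g x p ∂μ)
      + ∑ g, centredFourthCumulant μ
        (fun x => X g x k) (fun x => X g x l) (fun x => X g x p) (fun x => X g x q) := by
  classical
  have hint (g₁ g₂ g₃ g₄ : ι) :
      Integrable (fun x => X g₁ x k * X g₂ x l * X g₃ x p * X g₄ x q) μ :=
    integrable_mul_mul_mul_of_memLp_four (hL4 g₁ k) (hL4 g₂ l) (hL4 g₃ p) (hL4 g₄ q)
  calc _ = ∑ g₄, ∑ g₃, ∑ g₂, ∑ g₁, ∫ x, X g₁ x k * X g₂ x l * X g₃ x p * X g₄ x q ∂μ := by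
        simp only [sum_mul, mul_sum]
        simp (disch := (intros; repeat (apply integrable_finsetSum; intros)); exact hint ..)
          only [integral_finsetSum]
    _ = _ := by
        simp only [integral_mul_mul_mul_eq_ite hX hind hmean, sum_add_distrib, sum_ite_irrel,
          sum_ite_eq', mem_univ, if_true, sum_const_zero, sum_mul_sum]
        congr 3 <;> exact sum_comm

end FourthMoment

section MomentBounds

lemma abs_mul_mul_mul_le_pow_four (a b c d : ℝ) :
    |a * b * c * d| ≤ (a ^ 4 + b ^ 4 + c ^ 4 + d ^ 4) / 4 := by
  rcases abs_cases (a * b * c * d) with ⟨h, _⟩ | ⟨h, _⟩ <;> rw [h] <;>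
    nlinarith [sq_nonneg (a * b - c * d), sq_nonneg (a * b + c * d), sq_nonneg (a ^ 2 - b ^ 2),
      sq_nonneg (c ^ 2 - d ^ 2)]

lemma abs_mul_le_pow_four (a b : ℝ) : |a * b| ≤ (a ^ 4 + b ^ 4 + 2) / 4 := by
  simpa using (abs_mul_mul_mul_le_pow_four a b 1 1).trans_eq (by ring)

variable {Ω : Type*} [MeasurableSpace Ω] {μ : Measure Ω} {C : ℝ} {a b c d : Ω → ℝ}

lemma MeasureTheory.MemLp.integrable_pow_four (ha : MemLp a 4 μ) :
    Integrable (fun x => a x ^ 4) μ := by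
  simpa [Even.pow_abs (by decide : Even 4)] using ha.integrable_norm_pow (p := 4) (by norm_num)

lemma abs_integral_mul_mul_mul_le (ha : MemLp a 4 μ) (hb : MemLp b 4 μ) (hc : MemLp c 4 μ)
    (hd : MemLp d 4 μ) (hCa : ∫ x, a x ^ 4 ∂μ ≤ C) (hCb : ∫ x, b x ^ 4 ∂μ ≤ C)
    (hCc : ∫ x, c x ^ 4 ∂μ ≤ C) (hCd : ∫ x, d x ^ 4 ∂μ ≤ C) :
    |∫ x, a x * b x * c x * d x ∂μ| ≤ C := by
  have ha4 := ha.integrable_pow_four; have hb4 := hb.integrable_pow_four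
  have hc4 := hc.integrable_pow_four; have hd4 := hd.integrable_pow_four
  calc |∫ x, a x * b x * c x * d x ∂μ|
      ≤ ∫ x, (a x ^ 4 + b x ^ 4 + c x ^ 4 + d x ^ 4) / 4 ∂μ :=
        (Real.norm_eq_abs _).symm.trans_le <| norm_integral_le_of_norm_le
          ((((ha4.fun_add hb4).fun_add hc4).fun_add hd4).div_const 4)
          (.of_forall fun x => (Real.norm_eq_abs _).trans_le (abs_mul_mul_mul_le_pow_four _ _ _ _))
    _ = ((∫ x, a x ^ 4 ∂μ) + (∫ x, b x ^ 4 ∂μ) + (∫ x, c x ^ 4 ∂μ) + ∫ x, d x ^ 4 ∂μ) / 4 := by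
        rw [integral_div, integral_add ((ha4.fun_add hb4).fun_add hc4) hd4,
          integral_add (ha4.fun_add hb4) hc4, integral_add ha4 hb4]
    _ ≤ C := by linarith

variable [IsProbabilityMeasure μ]

lemma abs_integral_mul_le (ha : MemLp a 4 μ) (hb : MemLp b 4 μ)
    (hCa : ∫ x, a x ^ 4 ∂μ ≤ C) (hCb : ∫ x, b x ^ 4 ∂μ ≤ C) :
    |∫ x, a x * b x ∂μ| ≤ (C + 1) / 2 := by
  have ha4 := ha.integrable_pow_four; have hb4 := hb.integrable_pow_four
  calc |∫ x, a x * b x ∂μ|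
      ≤ ∫ x, (a x ^ 4 + b x ^ 4 + 2) / 4 ∂μ :=
        (Real.norm_eq_abs _).symm.trans_le <| norm_integral_le_of_norm_le
          (((ha4.fun_add hb4).fun_add (integrable_const 2)).div_const 4)
          (.of_forall fun x => (Real.norm_eq_abs _).trans_le (abs_mul_le_pow_four _ _))
    _ = ((∫ x, a x ^ 4 ∂μ) + (∫ x, b x ^ 4 ∂μ) + 2) / 4 := by
        rw [integral_div, integral_add (ha4.fun_add hb4) (integrable_const _),
          integral_add ha4 hb4, integral_const, probReal_univ, one_smul]
    _ ≤ (C + 1) / 2 := by linarith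

lemma abs_integral_mul_mul_integral_mul_le (ha : MemLp a 4 μ) (hb : MemLp b 4 μ)
    (hc : MemLp c 4 μ) (hd : MemLp d 4 μ) (hCa : ∫ x, a x ^ 4 ∂μ ≤ C) (hCb : ∫ x, b x ^ 4 ∂μ ≤ C)
    (hCc : ∫ x, c x ^ 4 ∂μ ≤ C) (hCd : ∫ x, d x ^ 4 ∂μ ≤ C) :
    |(∫ x, a x * b x ∂μ) * ∫ x, c x * d x ∂μ| ≤ ((C + 1) / 2) ^ 2 := by
  have hab := abs_integral_mul_le ha hb hCa hCb
  rw [abs_mul, sq]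
  exact mul_le_mul hab (abs_integral_mul_le hc hd hCc hCd) (abs_nonneg _) ((abs_nonneg _).trans hab)

lemma abs_centredFourthCumulant_le (ha : MemLp a 4 μ) (hb : MemLp b 4 μ)
    (hc : MemLp c 4 μ) (hd : MemLp d 4 μ) (hCa : ∫ x, a x ^ 4 ∂μ ≤ C) (hCb : ∫ x, b x ^ 4 ∂μ ≤ C)
    (hCc : ∫ x, c x ^ 4 ∂μ ≤ C) (hCd : ∫ x, d x ^ 4 ∂μ ≤ C) :
    |centredFourthCumulant μ a b c d| ≤ C + 3 * ((C + 1) / 2) ^ 2 := by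
  have h₀ := abs_le.mp (abs_integral_mul_mul_mul_le ha hb hc hd hCa hCb hCc hCd)
  have h₁ := abs_le.mp (abs_integral_mul_mul_integral_mul_le ha hb hc hd hCa hCb hCc hCd)
  have h₂ := abs_le.mp (abs_integral_mul_mul_integral_mul_le ha hc hb hd hCa hCc hCb hCd)
  have h₃ := abs_le.mp (abs_integral_mul_mul_integral_mul_le ha hd hb hc hCa hCd hCb hCc)
  unfold centredFourthCumulant
  exact abs_le.mpr ⟨by linarith, by linarith⟩

end MomentBounds

section QuadraticForm

variable {n : Type*} [Fintype n]

lemma dotProduct_mulVec_eq_sum_sum {R : Type*} [CommSemiring R] (Γ : Matrix n n R) (v w : n → R) :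
    v ⬝ᵥ (Γ *ᵥ w) = ∑ i, ∑ j, Γ i j * (v i * w j) := by
  simp only [dotProduct, mulVec, mul_sum]
  exact sum_congr rfl fun i _ => sum_congr rfl fun j _ => by ring

lemma smul_dotProduct_mulVec_smul {R : Type*} [CommSemiring R] (Γ : Matrix n n R) (c : R)
    (v w : n → R) : (c • v) ⬝ᵥ (Γ *ᵥ (c • w)) = c ^ 2 * (v ⬝ᵥ (Γ *ᵥ w)) := by
  rw [smul_dotProduct, mulVec_smul, dotProduct_smul, smul_eq_mul, smul_eq_mul]
  ring

lemma abs_sum_sum_mul_le (Γ : Matrix n n ℝ) {f : n → n → ℝ} {c : ℝ} (hf : ∀ i j, |f i j| ≤ c) :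
    |∑ i, ∑ j, Γ i j * f i j| ≤ (∑ i, ∑ j, |Γ i j|) * c := by
  simp only [sum_mul]
  refine (abs_sum_le_sum_abs _ _).trans (sum_le_sum fun i _ => ?_)
  refine (abs_sum_le_sum_abs _ _).trans (sum_le_sum fun j _ => ?_)
  rw [abs_mul]
  exact mul_le_mul_of_nonneg_left (hf i j) (abs_nonneg _)

variable {Ω : Type*} [MeasurableSpace Ω] {μ : Measure Ω}

lemma integral_dotProduct_mulVec (Γ : Matrix n n ℝ) {u v : Ω → n → ℝ}
    (h : ∀ i j, Integrable (fun x => u x i * v x j) μ) :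
    ∫ x, u x ⬝ᵥ (Γ *ᵥ v x) ∂μ = ∑ i, ∑ j, Γ i j * ∫ x, u x i * v x j ∂μ := by
  simp only [dotProduct_mulVec_eq_sum_sum]
  rw [integral_finsetSum _ fun i _ => integrable_finsetSum _ fun j _ => (h i j).const_mul (Γ i j)]
  refine sum_congr rfl fun i _ => ?_
  rw [integral_finsetSum _ fun j _ => (h i j).const_mul (Γ i j)]
  exact sum_congr rfl fun j _ => integral_const_mul _ _

lemma sum_integral_dotProduct_mulVec {ι : Type*} [Fintype ι] (Γ : Matrix n n ℝ)
    {v : ι → Ω → n → ℝ} (hv : ∀ g i, MemLp (fun x => v g x i) 2 μ) :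
    ∑ g, ∫ x, v g x ⬝ᵥ (Γ *ᵥ v g x) ∂μ = ∑ i, ∑ j, Γ i j * ∑ g, ∫ x, v g x i * v g x j ∂μ := by
  simp only [mul_sum]
  rw [sum_congr rfl fun g _ => integral_dotProduct_mulVec Γ fun i j =>
    (hv g i).integrable_mul (hv g j), sum_comm]
  exact sum_congr rfl fun i _ => sum_comm

lemma integral_sq_mul_smul_dotProduct_mulVec_smul (Γ : Matrix n n ℝ) (c : ℝ) {s : Ω → ℝ}
    {v : Ω → n → ℝ} (hs : MemLp s 4 μ) (hv : ∀ i, MemLp (fun x => v x i) 4 μ) :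
    ∫ x, (c * s x) ^ 2 * ((c • v x) ⬝ᵥ (Γ *ᵥ (c • v x))) ∂μ
      = c ^ 4 * ∑ i, ∑ j, Γ i j * ∫ x, s x * s x * v x i * v x j ∂μ := by
  have hpt (x : Ω) : (c * s x) ^ 2 * ((c • v x) ⬝ᵥ (Γ *ᵥ (c • v x)))
      = c ^ 4 * ((s x * s x) • v x) ⬝ᵥ (Γ *ᵥ v x) := by
    rw [smul_dotProduct_mulVec_smul, smul_dotProduct, smul_eq_mul]
    ring
  simp_rw [hpt]
  rw [integral_const_mul, integral_dotProduct_mulVec (u := fun x => (s x * s x) • v x) Γ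
    fun i j => integrable_mul_mul_mul_of_memLp_four hs hs (hv i) (hv j)]
  simp only [Pi.smul_apply, smul_eq_mul]

end QuadraticForm

section StudentizationTerm

variable {Ω : Type*} [MeasurableSpace Ω] {μ : Measure Ω} {m G : ℕ}
  {A : Fin G → Ω → ℝ} {B : Fin G → Ω → Fin m → ℝ}

lemma integral_sum_mul_self_mul_sum_mul_sum
    (hmeas : ∀ g, Measurable (fun x => (A g x, B g x)))
    (hind : iIndepFun (fun g x => (A g x, B g x)) μ)
    (hA4 : ∀ g, MemLp (A g) 4 μ) (hB4 : ∀ g i, MemLp (fun x => B g x i) 4 μ)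
    (hA0 : ∀ g, ∫ x, A g x ∂μ = 0) (hB0 : ∀ g i, ∫ x, B g x i ∂μ = 0) (i j : Fin m) :
    ∫ x, (∑ g, A g x) * (∑ g, A g x) * (∑ g, B g x i) * (∑ g, B g x j) ∂μ =
      (∑ g, ∫ x, A g x * A g x ∂μ) * (∑ g, ∫ x, B g x i * B g x j ∂μ)
      + 2 * ((∑ g, ∫ x, A g x * B g x i ∂μ) * (∑ g, ∫ x, A g x * B g x j ∂μ))
      + ∑ g, centredFourthCumulant μ
        (A g) (A g) (fun x => B g x i) (fun x => B g x j) := by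
  have hcons : Measurable fun p : ℝ × (Fin m → ℝ) => (Fin.cons p.1 p.2 : Fin (m + 1) → ℝ) := by
    fun_prop
  have := integral_sum_mul_sum_mul_sum_mul_sum (X := fun g x => Fin.cons (A g x) (B g x))
    (fun g => hcons.comp (hmeas g)) (hind.comp _ fun _ => hcons)
    (fun g k => Fin.cases (hA4 g) (hB4 g) k) (fun g k => Fin.cases (hA0 g) (hB0 g) k)
    0 0 i.succ j.succ
  simp only [Fin.cons_zero, Fin.cons_succ] at this
  rw [this]
  ring

lemma abs_studentization_term_sub_le [IsProbabilityMeasure μ] (Γ : Matrix (Fin m) (Fin m) ℝ)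
    (hmeas : ∀ g, Measurable (fun x => (A g x, B g x)))
    (hind : iIndepFun (fun g x => (A g x, B g x)) μ)
    (hA4 : ∀ g, MemLp (A g) 4 μ) (hB4 : ∀ g i, MemLp (fun x => B g x i) 4 μ)
    (hA0 : ∀ g, ∫ x, A g x ∂μ = 0) (hB0 : ∀ g i, ∫ x, B g x i ∂μ = 0) {C : ℝ}
    (hCA : ∀ g, ∫ x, A g x ^ 4 ∂μ ≤ C) (hCB : ∀ g i, ∫ x, B g x i ^ 4 ∂μ ≤ C)
    (hnorm : (G : ℝ)⁻¹ * ∑ g, ∫ x, A g x ^ 2 ∂μ = 1) :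
    |(G : ℝ) * (∫ x, ((G : ℝ)⁻¹ * ∑ g, A g x) ^ 2 *
          (((G : ℝ)⁻¹ • ∑ g, B g x) ⬝ᵥ (Γ *ᵥ ((G : ℝ)⁻¹ • ∑ g, B g x))) ∂μ)
        - (G : ℝ)⁻¹ * (((G : ℝ)⁻¹ * ∑ g, ∫ x, B g x ⬝ᵥ (Γ *ᵥ B g x) ∂μ)
            + 2 * (((G : ℝ)⁻¹ • ∑ g, fun i => ∫ x, A g x * B g x i ∂μ) ⬝ᵥ
                (Γ *ᵥ ((G : ℝ)⁻¹ • ∑ g, fun i => ∫ x, A g x * B g x i ∂μ))))|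
      ≤ (∑ i, ∑ j, |Γ i j|) * (C + 3 * ((C + 1) / 2) ^ 2) * ((G : ℝ) ^ 2)⁻¹ := by
  have hG : (G : ℝ) ≠ 0 := by rintro hG; simp [hG] at hnorm
  have hsumA : ∑ g, ∫ x, A g x * A g x ∂μ = G := by
    simp_rw [← sq]; field_simp at hnorm; linarith
  set Q : Fin m → Fin m → ℝ := fun i j => ∑ g, ∫ x, B g x i * B g x j ∂μ
  set M : Fin m → ℝ := fun i => ∑ g, ∫ x, A g x * B g x i ∂μ
  set K : Fin m → Fin m → ℝ := fun i j => ∑ g, centredFourthCumulant μ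
    (A g) (A g) (fun x => B g x i) (fun x => B g x j)
  have hLHS : ∫ x, ((G : ℝ)⁻¹ * ∑ g, A g x) ^ 2 *
      (((G : ℝ)⁻¹ • ∑ g, B g x) ⬝ᵥ (Γ *ᵥ ((G : ℝ)⁻¹ • ∑ g, B g x))) ∂μ
      = (G : ℝ)⁻¹ ^ 4 * ∑ i, ∑ j, Γ i j * (G * Q i j + 2 * (M i * M j) + K i j) := by
    rw [integral_sq_mul_smul_dotProduct_mulVec_smul Γ _ (memLp_finsetSum _ fun g _ => hA4 g)
      fun i => by simpa only [Finset.sum_apply] using memLp_finsetSum _ fun g _ => hB4 g i]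
    simp only [Finset.sum_apply, integral_sum_mul_self_mul_sum_mul_sum hmeas hind hA4 hB4 hA0 hB0,
      hsumA, Q, M, K]
  have hM : ((G : ℝ)⁻¹ • ∑ g, fun i => ∫ x, A g x * B g x i ∂μ) ⬝ᵥ
      (Γ *ᵥ ((G : ℝ)⁻¹ • ∑ g, fun i => ∫ x, A g x * B g x i ∂μ))
      = (G : ℝ)⁻¹ ^ 2 * ∑ i, ∑ j, Γ i j * (M i * M j) := by
    rw [smul_dotProduct_mulVec_smul, dotProduct_mulVec_eq_sum_sum]
    simp only [Finset.sum_apply, M]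
  have hsplit : ∑ i, ∑ j, Γ i j * (G * Q i j + 2 * (M i * M j) + K i j)
      = G * ∑ i, ∑ j, Γ i j * Q i j + 2 * ∑ i, ∑ j, Γ i j * (M i * M j)
        + ∑ i, ∑ j, Γ i j * K i j := by
    simp only [mul_sum, ← sum_add_distrib]
    exact sum_congr rfl fun i _ => sum_congr rfl fun j _ => by ring
  have hK (i j : Fin m) : |K i j| ≤ G * (C + 3 * ((C + 1) / 2) ^ 2) := by
    refine ((abs_sum_le_sum_abs _ _).trans (sum_le_sum fun g _ => abs_centredFourthCumulant_le
      (hA4 g) (hA4 g) (hB4 g i) (hB4 g j) (hCA g) (hCA g) (hCB g i) (hCB g j))).trans_eq ?_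
    rw [sum_const, card_univ, Fintype.card_fin, nsmul_eq_mul]
  have hcancel (q r k : ℝ) : (G : ℝ) * ((G : ℝ)⁻¹ ^ 4 * (G * q + 2 * r + k))
      - (G : ℝ)⁻¹ * ((G : ℝ)⁻¹ * q + 2 * ((G : ℝ)⁻¹ ^ 2 * r)) = (G : ℝ)⁻¹ ^ 3 * k := by
    field_simp
    ring
  rw [hLHS, sum_integral_dotProduct_mulVec Γ fun g i => (hB4 g i).mono_exponent (by norm_num), hM,
    hsplit, hcancel, abs_mul, abs_of_nonneg (by positivity)]
  calc _ ≤ (G : ℝ)⁻¹ ^ 3 * ((∑ i, ∑ j, |Γ i j|) * (G * (C + 3 * ((C + 1) / 2) ^ 2))) := by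
        gcongr
        exact abs_sum_sum_mul_le Γ hK
    _ = _ := by
        field_simp

end StudentizationTerm

theorem second_moment_studentization_term_general
    {Ω : Type*} [MeasureSpace Ω] [IsProbabilityMeasure (ℙ : Measure Ω)]
    (m : ℕ) (Γ : Matrix (Fin m) (Fin m) ℝ)
    (ω₁ : (G : ℕ) → Fin G → Ω → ℝ)
    (ω₂ : (G : ℕ) → Fin G → Ω → (Fin m → ℝ))
    (hmeas : ∀ G g, Measurable (fun x => (ω₁ G g x, ω₂ G g x)))
    (hindep : ∀ G : ℕ, iIndepFun
        (fun (g : Fin G) (x : Ω) => (ω₁ G g x, ω₂ G g x)) ℙ)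
    (hL4 : ∀ G g, MemLp (ω₁ G g) 4 ℙ)
    (hL4' : ∀ G g i, MemLp (fun x => ω₂ G g x i) 4 ℙ)
    (hmean1 : ∀ G g, (∫ x, ω₁ G g x) = 0)
    (hmean2 : ∀ G g i, (∫ x, ω₂ G g x i) = 0)
    (C : ℝ)
    (hC1 : ∀ G g, (∫ x, ω₁ G g x ^ 4) ≤ C)
    (hC2 : ∀ G g i, (∫ x, |ω₂ G g x i| ^ 4) ≤ C)
    (hnorm : ∀ G : ℕ, 1 ≤ G → (G : ℝ)⁻¹ * ∑ g, (∫ x, ω₁ G g x ^ 2) = 1) :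
    ∃ C' : ℝ, ∀ G : ℕ, 1 ≤ G →
      |(G : ℝ) * (∫ x, ((G : ℝ)⁻¹ * ∑ g, ω₁ G g x) ^ 2 *
            (((G : ℝ)⁻¹ • ∑ g, ω₂ G g x) ⬝ᵥ (Γ *ᵥ ((G : ℝ)⁻¹ • ∑ g, ω₂ G g x))))
          - (G : ℝ)⁻¹ * (((G : ℝ)⁻¹ * ∑ g, ∫ x, ω₂ G g x ⬝ᵥ (Γ *ᵥ ω₂ G g x))
              + 2 * (((G : ℝ)⁻¹ • ∑ g, fun i => ∫ x, ω₁ G g x * ω₂ G g x i) ⬝ᵥ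
                  (Γ *ᵥ ((G : ℝ)⁻¹ • ∑ g, fun i => ∫ x, ω₁ G g x * ω₂ G g x i))))|
        ≤ C' * ((G : ℝ) ^ 2)⁻¹ := by
  have hC2' (G : ℕ) (g : Fin G) (i : Fin m) : ∫ x, ω₂ G g x i ^ 4 ≤ C := by
    simpa only [Even.pow_abs (by decide : Even 4)] using hC2 G g i
  exact ⟨_, fun G hG => abs_studentization_term_sub_le Γ (hmeas G) (hindep G) (hL4 G) (hL4' G)
    (hmean1 G) (hmean2 G) (hC1 G) (hC2' G) (hnorm G hG)⟩

/-- For a triangular array of mean-zero scores `(ω₁ G g, ω₂ G g)`,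
independent across `g` for each `G`, with uniformly bounded fourth moments and the
normalization `(1/G) ∑ g E[ω₁²] = 1`, one has
`G E[W₁² W₂'Γ W₂] = G⁻¹ (μ₂₂ + 2 μ₁₂'Γ μ₁₂) + O(G⁻²)`, where
`μ₂₂ = (1/G)∑ E[ω₂'Γω₂]` and `μ₁₂ = (1/G)∑ E[ω₁ ω₂]`. -/
theorem second_moment_studentization_term
    {Ω : Type*} [MeasureSpace Ω] [IsProbabilityMeasure (ℙ : Measure Ω)]
    (m : ℕ) (Γ : Matrix (Fin m) (Fin m) ℝ) (hΓ : Γ.IsSymm)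
    (ω₁ : (G : ℕ) → Fin G → Ω → ℝ)
    (ω₂ : (G : ℕ) → Fin G → Ω → (Fin m → ℝ))
    (hmeas : ∀ G g, Measurable (fun x => (ω₁ G g x, ω₂ G g x)))
    (hindep : ∀ G : ℕ, iIndepFun
        (fun (g : Fin G) (x : Ω) => (ω₁ G g x, ω₂ G g x)) ℙ)
    (hL4 : ∀ G g, MemLp (ω₁ G g) 4 ℙ)
    (hL4' : ∀ G g i, MemLp (fun x => ω₂ G g x i) 4 ℙ)
    (hmean1 : ∀ G g, (∫ x, ω₁ G g x) = 0)
    (hmean2 : ∀ G g i, (∫ x, ω₂ G g x i) = 0)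
    (C : ℝ)
    (hC1 : ∀ G g, (∫ x, ω₁ G g x ^ 4) ≤ C)
    (hC2 : ∀ G g i, (∫ x, |ω₂ G g x i| ^ 4) ≤ C)
    (hnorm : ∀ G : ℕ, 1 ≤ G → (G : ℝ)⁻¹ * ∑ g, (∫ x, ω₁ G g x ^ 2) = 1) :
    ∃ C' : ℝ, ∀ G : ℕ, 1 ≤ G →
      |(G : ℝ) * (∫ x, ((G : ℝ)⁻¹ * ∑ g, ω₁ G g x) ^ 2 *
            (((G : ℝ)⁻¹ • ∑ g, ω₂ G g x) ⬝ᵥ (Γ *ᵥ ((G : ℝ)⁻¹ • ∑ g, ω₂ G g x))))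
          - (G : ℝ)⁻¹ * (((G : ℝ)⁻¹ * ∑ g, ∫ x, ω₂ G g x ⬝ᵥ (Γ *ᵥ ω₂ G g x))
              + 2 * (((G : ℝ)⁻¹ • ∑ g, fun i => ∫ x, ω₁ G g x * ω₂ G g x i) ⬝ᵥ
                  (Γ *ᵥ ((G : ℝ)⁻¹ • ∑ g, fun i => ∫ x, ω₁ G g x * ω₂ G g x i))))|
        ≤ C' * ((G : ℝ) ^ 2)⁻¹ :=
  second_moment_studentization_term_general m Γ ω₁ ω₂ hmeas hindep hL4 hL4' hmean1 hmean2 C hC1 hC2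
    hnorm
end
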